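/- Let G = C_k be a cycle of length k ≥ 3. Then the graph G_∅ from the parity construction is isomorphic to the disjoint union of two cycles of length k, and G_{\{v\}} (for any vertex v) is isomorphic to the cycle of length 2k. -/

import Mathlib

open SimpleGraph

variable {V : Type}

/-- Vertices of the parity construction `G_U`: pairs `(v, S)` with `S` a set of edges
incident to `v` whose cardinality has the parity of `|{v} ∩ U|`. -/
def ParityVert (G : SimpleGraph V) (U : Set V) : Type :=
  {p : V × Set (Sym2 V) //
    p.2 ⊆ G.incidenceSet p.1 ∧ p.2.ncard % 2 = ({p.1} ∩ U : Set V).ncard % 2}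

/-- The parity construction `G_U`: `(v,S)` is adjacent to `(u,T)` iff `uv ∈ E(G)` and
`uv ∉ S △ T`. -/
def parityGraph (G : SimpleGraph V) (U : Set V) : SimpleGraph (ParityVert G U) where
  Adj x y := G.Adj x.1.1 y.1.1 ∧ s(x.1.1, y.1.1) ∉ symmDiff x.1.2 y.1.2
  symm := ⟨by
    rintro x y ⟨h1, h2⟩
    exact ⟨h1.symm, by rw [Sym2.eq_swap, symmDiff_comm]; exact h2⟩⟩
  loopless := ⟨fun x h => G.loopless.irrefl _ h.1⟩

/-!
In a cycle every vertex `v` has exactly the two incident edges `s(v - 1, v)` and `s(v, v + 1)`,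
so a vertex `(v, S)` of `G_U` is determined by `v` and by whether the forward edge lies in `S`:
the parity condition then decides whether the backward edge does. In these coordinates `G_U`
becomes a double cover of `C_k` in which the step from `v` to `v + 1` changes sheets exactly
when `v + 1 ∈ U`. With no change of sheets this is two disjoint copies of `C_k`; with a single
one, going once around the cycle swaps the sheets, so the cover is a single cycle of length `2k`.
-/

open Fin.CommRing

lemma Set.odd_ncard_iff_of_subset_pair {α : Type*} {a b : α} {S : Set α} (hab : a ≠ b)
    (hS : S ⊆ {a, b}) : Odd S.ncard ↔ (a ∈ S ↔ b ∉ S) := by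
  by_cases ha : a ∈ S <;> by_cases hb : b ∈ S
  · rw [hS.antisymm (Set.insert_subset ha (Set.singleton_subset_iff.2 hb)), Set.ncard_pair hab]
    simp
  · rw [show S = {a} from Set.eq_singleton_iff_unique_mem.2
      ⟨ha, fun x hx => (hS hx).resolve_right (by rintro rfl; exact hb hx)⟩]
    simp [hab.symm]
  · rw [show S = {b} from Set.eq_singleton_iff_unique_mem.2
      ⟨hb, fun x hx => (hS hx).resolve_left (by rintro rfl; exact ha hx)⟩]
    simp [hab]
  · rw [show S = ∅ from Set.eq_empty_of_forall_notMem fun x hx => by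
      rcases hS hx with rfl | rfl <;> contradiction]
    simp

lemma Set.odd_ncard_singleton_inter_iff {α : Type*} {a : α} {U : Set α} :
    Odd ({a} ∩ U).ncard ↔ a ∈ U := by
  by_cases ha : a ∈ U <;> simp [ha]

lemma Set.eq_of_subset_pair {α : Type*} {a b : α} {S T : Set α} (hS : S ⊆ {a, b})
    (hT : T ⊆ {a, b}) (ha : a ∈ S ↔ a ∈ T) (hb : b ∈ S ↔ b ∈ T) : S = T := by
  ext x
  constructor
  · intro hx; rcases hS hx with rfl | rfl <;> tauto
  · intro hx; rcases hT hx with rfl | rfl <;> tauto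

lemma parityGraph_adj {G : SimpleGraph V} {U : Set V} {x y : ParityVert G U} :
    (parityGraph G U).Adj x y ↔
      G.Adj x.1.1 y.1.1 ∧ (s(x.1.1, y.1.1) ∈ x.1.2 ↔ s(x.1.1, y.1.1) ∈ y.1.2) := by
  change _ ∧ _ ∉ symmDiff _ _ ↔ _
  rw [Set.mem_symmDiff]
  tauto

def boolProdFinEquiv (n : ℕ) : Bool × Fin n ≃ Fin (2 * n) :=
  (finTwoEquiv.symm.prodCongr (Equiv.refl _)).trans finProdFinEquiv

lemma boolProdFinEquiv_val {n : ℕ} (x : Bool × Fin n) :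
    (boolProdFinEquiv n x : ℕ) = x.2 + n * x.1.toNat := by
  obtain ⟨a, u⟩ := x
  cases a <;> simp [boolProdFinEquiv, finTwoEquiv]

section Cycle

variable {n : ℕ} [NeZero n]

lemma Fin.val_one_of_two_le (hn : 2 ≤ n) : ((1 : Fin n) : ℕ) = 1 := by
  rw [Fin.val_one', Nat.mod_eq_of_lt (by omega)]

lemma Fin.one_ne_zero_of_two_le (hn : 2 ≤ n) : (1 : Fin n) ≠ 0 := by
  rw [Ne, Fin.ext_iff, Fin.val_one_of_two_le hn, Fin.val_zero]
  omega

lemma Fin.two_ne_zero_of_three_le (hn : 3 ≤ n) : (2 : Fin n) ≠ 0 := by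
  simp [Fin.ext_iff, Nat.mod_eq_of_lt (show 2 < n by omega)]

lemma cycleGraph_adj_iff (hn : 2 ≤ n) {u v : Fin n} :
    (cycleGraph n).Adj u v ↔ v = u + 1 ∨ u = v + 1 := by
  rw [cycleGraph_adj', ← Fin.val_one_of_two_le hn, ← Fin.ext_iff, ← Fin.ext_iff,
    sub_eq_iff_eq_add, sub_eq_iff_eq_add, add_comm 1, add_comm 1, or_comm]

lemma incidenceSet_cycleGraph (hn : 2 ≤ n) (v : Fin n) :
    (cycleGraph n).incidenceSet v = {s(v - 1, v), s(v, v + 1)} := by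
  ext e
  induction e using Sym2.ind with
  | _ a b =>
    simp only [mk'_mem_incidenceSet_iff, cycleGraph_adj_iff hn, Set.mem_insert_iff,
      Set.mem_singleton_iff, Sym2.eq_iff]
    constructor
    · rintro ⟨rfl | rfl, rfl | rfl⟩ <;> simp
    · rintro ((⟨rfl, rfl⟩ | ⟨rfl, rfl⟩) | ⟨rfl, rfl⟩ | ⟨rfl, rfl⟩) <;> simp

lemma cycleGraph_edge_pred_ne_succ (hn : 3 ≤ n) (v : Fin n) : s(v - 1, v) ≠ s(v, v + 1) := by
  intro h
  rcases Sym2.eq_iff.1 h with ⟨h1, -⟩ | ⟨h1, -⟩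
  · exact Fin.one_ne_zero_of_two_le (n := n) (by omega) (by linear_combination -h1)
  · exact Fin.two_ne_zero_of_three_le hn (by linear_combination -h1)

lemma ncard_parity_iff_of_subset_incidenceSet_cycleGraph (hn : 3 ≤ n) (U : Set (Fin n))
    {v : Fin n} {S : Set (Sym2 (Fin n))} (hS : S ⊆ (cycleGraph n).incidenceSet v) :
    S.ncard % 2 = ({v} ∩ U).ncard % 2 ↔ (s(v - 1, v) ∈ S ↔ (s(v, v + 1) ∈ S ↔ v ∉ U)) := by
  rw [incidenceSet_cycleGraph (by omega)] at hS
  have hodd : S.ncard % 2 = ({v} ∩ U).ncard % 2 ↔ (Odd S.ncard ↔ Odd ({v} ∩ U).ncard) := by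
    simp only [Nat.odd_iff]
    omega
  rw [hodd, Set.odd_ncard_iff_of_subset_pair (cycleGraph_edge_pred_ne_succ hn v) hS,
    Set.odd_ncard_singleton_inter_iff]
  tauto

def twistedCycleGraph (n : ℕ) [NeZero n] (U : Set (Fin n)) : SimpleGraph (Bool × Fin n) :=
  SimpleGraph.fromRel fun x y => y.2 = x.2 + 1 ∧ (x.1 = y.1 ↔ y.2 ∉ U)

lemma twistedCycleGraph_adj (hn : 2 ≤ n) {U : Set (Fin n)} {x y : Bool × Fin n} :
    (twistedCycleGraph n U).Adj x y ↔
      (y.2 = x.2 + 1 ∧ (x.1 = y.1 ↔ y.2 ∉ U)) ∨ (x.2 = y.2 + 1 ∧ (y.1 = x.1 ↔ x.2 ∉ U)) := by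
  rw [twistedCycleGraph, fromRel_adj, and_iff_right_iff_imp]
  rintro (⟨h, -⟩ | ⟨h, -⟩) rfl <;>
    exact Fin.one_ne_zero_of_two_le hn (by linear_combination -h)

/-- The edge set of the vertex of `G_U` over `x.2` on sheet `x.1`: the sheet records whether the
forward edge `s(x.2, x.2 + 1)` is present, and the parity condition forces the backward one. -/
def cycleSheet (U : Set (Fin n)) (x : Bool × Fin n) : Set (Sym2 (Fin n)) :=
  {e | e = s(x.2, x.2 + 1) ∧ x.1 = true ∨ e = s(x.2 - 1, x.2) ∧ (x.1 = true ↔ x.2 ∉ U)}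

lemma succ_mem_cycleSheet_iff (hn : 3 ≤ n) {U : Set (Fin n)} {x : Bool × Fin n} :
    s(x.2, x.2 + 1) ∈ cycleSheet U x ↔ x.1 = true := by
  simp [cycleSheet, (cycleGraph_edge_pred_ne_succ hn x.2).symm]

lemma pred_mem_cycleSheet_iff (hn : 3 ≤ n) {U : Set (Fin n)} {x : Bool × Fin n} :
    s(x.2 - 1, x.2) ∈ cycleSheet U x ↔ (x.1 = true ↔ x.2 ∉ U) := by
  simp [cycleSheet, cycleGraph_edge_pred_ne_succ hn x.2]

lemma cycleSheet_subset_incidenceSet (hn : 2 ≤ n) (U : Set (Fin n)) (x : Bool × Fin n) :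
    cycleSheet U x ⊆ (cycleGraph n).incidenceSet x.2 := by
  rw [incidenceSet_cycleGraph hn]
  rintro e (⟨rfl, -⟩ | ⟨rfl, -⟩) <;> simp

lemma cycleSheet_mem_iff_of_eq_add_one (hn : 3 ≤ n) {U : Set (Fin n)} {x y : Bool × Fin n}
    (h : y.2 = x.2 + 1) :
    (s(x.2, y.2) ∈ cycleSheet U x ↔ s(x.2, y.2) ∈ cycleSheet U y) ↔ (x.1 = y.1 ↔ y.2 ∉ U) := by
  obtain ⟨a, u⟩ := x
  obtain ⟨b, w⟩ := y
  obtain rfl : w = u + 1 := h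
  have hpred : s(u, u + 1) = s(u + 1 - 1, u + 1) := by rw [add_sub_cancel_right]
  rw [succ_mem_cycleSheet_iff hn (x := (a, u)), hpred, pred_mem_cycleSheet_iff hn (x := (b, u + 1))]
  cases a <;> cases b <;> simp

def cycleParityVert (hn : 3 ≤ n) (U : Set (Fin n)) (x : Bool × Fin n) :
    ParityVert (cycleGraph n) U :=
  ⟨(x.2, cycleSheet U x), cycleSheet_subset_incidenceSet (by omega) U x,
    (ncard_parity_iff_of_subset_incidenceSet_cycleGraph hn U
      (cycleSheet_subset_incidenceSet (by omega) U x)).2 (by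
        rw [pred_mem_cycleSheet_iff hn, succ_mem_cycleSheet_iff hn])⟩

lemma cycleParityVert_bijective (hn : 3 ≤ n) (U : Set (Fin n)) :
    Function.Bijective (cycleParityVert hn U) := by
  refine ⟨fun x y hxy => ?_, ?_⟩
  · have h2 : x.2 = y.2 := congrArg (fun p => p.1.1) hxy
    have hS : cycleSheet U x = cycleSheet U y := congrArg (fun p => p.1.2) hxy
    refine Prod.ext ?_ h2
    rw [Bool.eq_iff_iff, ← succ_mem_cycleSheet_iff hn, ← succ_mem_cycleSheet_iff hn, hS, h2]
  · classical
    rintro ⟨⟨v, S⟩, hS, hpar⟩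
    dsimp only at hS hpar
    have hpred := (ncard_parity_iff_of_subset_incidenceSet_cycleGraph hn U hS).1 hpar
    suffices h : cycleSheet U (decide (s(v, v + 1) ∈ S), v) = S from
      ⟨_, Subtype.ext (Prod.ext rfl h)⟩
    rw [incidenceSet_cycleGraph (by omega)] at hS
    refine Set.eq_of_subset_pair ?_ hS ?_ ?_
    · exact incidenceSet_cycleGraph (n := n) (by omega) v ▸
        cycleSheet_subset_incidenceSet (by omega) U _
    · rw [pred_mem_cycleSheet_iff hn, hpred, decide_eq_true_iff]
    · rw [succ_mem_cycleSheet_iff hn, decide_eq_true_iff]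

noncomputable def twistedCycleGraphIsoParityGraph (hn : 3 ≤ n) (U : Set (Fin n)) :
    twistedCycleGraph n U ≃g parityGraph (cycleGraph n) U where
  toEquiv := Equiv.ofBijective _ (cycleParityVert_bijective hn U)
  map_rel_iff' {x y} := by
    rw [Equiv.ofBijective_apply, Equiv.ofBijective_apply, parityGraph_adj,
      cycleGraph_adj_iff (by omega), twistedCycleGraph_adj (by omega)]
    constructor
    · rintro ⟨h | h, hm⟩
      · exact Or.inl ⟨h, (cycleSheet_mem_iff_of_eq_add_one hn h).1 hm⟩
      · refine Or.inr ⟨h, (cycleSheet_mem_iff_of_eq_add_one hn h).1 ?_⟩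
        rw [Sym2.eq_swap]
        exact hm.symm
    · rintro (⟨h, hb⟩ | ⟨h, hb⟩)
      · exact ⟨Or.inl h, (cycleSheet_mem_iff_of_eq_add_one hn h).2 hb⟩
      · refine ⟨Or.inr h, ?_⟩
        rw [Sym2.eq_swap]
        exact ((cycleSheet_mem_iff_of_eq_add_one hn h).2 hb).symm

def twistedCycleGraphEmptyIso (hn : 2 ≤ n) :
    twistedCycleGraph n ∅ ≃g cycleGraph n ⊕g cycleGraph n where
  toEquiv := Equiv.boolProdEquivSum (Fin n)
  map_rel_iff' {x y} := by
    obtain ⟨a, u⟩ := x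
    obtain ⟨b, w⟩ := y
    rw [twistedCycleGraph_adj hn]
    cases a <;> cases b <;> simp [cycleGraph_adj_iff hn]

def twistedCycleGraphAddRightIso (U : Set (Fin n)) (c : Fin n) :
    twistedCycleGraph n ((· + c) ⁻¹' U) ≃g twistedCycleGraph n U where
  toEquiv := (Equiv.refl Bool).prodCongr (Equiv.addRight c)
  map_rel_iff' {x y} := by
    simp [twistedCycleGraph, add_right_comm _ c 1, Prod.ext_iff]

lemma boolProdFinEquiv_eq_add_one_iff (hn : 2 ≤ n) {x y : Bool × Fin n} :
    boolProdFinEquiv n y = boolProdFinEquiv n x + 1 ↔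
      y.2 = x.2 + 1 ∧ (x.1 = y.1 ↔ y.2 ≠ 0) := by
  obtain ⟨a, u⟩ := x
  obtain ⟨b, w⟩ := y
  rw [← Fin.val_ne_zero_iff]
  simp only [Fin.ext_iff, Fin.val_add_eq_ite, boolProdFinEquiv_val, Fin.val_one_of_two_le hn,
    Fin.val_one_of_two_le (show 2 ≤ 2 * n by omega)]
  have := u.isLt
  have := w.isLt
  cases a <;> cases b <;> simp [-Fin.val_eq_zero_iff] <;> split_ifs <;> omega

def twistedCycleGraphSingletonZeroIso (hn : 2 ≤ n) :
    twistedCycleGraph n {0} ≃g cycleGraph (2 * n) where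
  toEquiv := boolProdFinEquiv n
  map_rel_iff' {x y} := by
    rw [cycleGraph_adj_iff (by omega), twistedCycleGraph_adj hn,
      boolProdFinEquiv_eq_add_one_iff hn, boolProdFinEquiv_eq_add_one_iff hn]
    rfl

end Cycle

/-- For the cycle `G = C_k` (`k ≥ 3`), the parity graph `G_∅` is
isomorphic to the disjoint union of two `k`-cycles, and `G_{{v}}` (for any vertex `v`)
is isomorphic to the cycle of length `2k`. -/
theorem parityGraph_cycle (k : ℕ) (hk : 3 ≤ k) :
    Nonempty (parityGraph (cycleGraph k) (∅ : Set (Fin k)) ≃g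
      (cycleGraph k ⊕g cycleGraph k)) ∧
    ∀ v : Fin k,
      Nonempty (parityGraph (cycleGraph k) ({v} : Set (Fin k)) ≃g cycleGraph (2 * k)) := by
  have : NeZero k := ⟨by omega⟩
  refine ⟨⟨(twistedCycleGraphIsoParityGraph hk ∅).symm.trans
    (twistedCycleGraphEmptyIso (by omega))⟩, fun v => ⟨?_⟩⟩
  have hrot := twistedCycleGraphAddRightIso {v} v
  rw [Set.preimage_add_right_singleton, add_neg_cancel] at hrot
  exact (twistedCycleGraphIsoParityGraph hk {v}).symm.trans
    (hrot.symm.trans (twistedCycleGraphSingletonZeroIso (by omega)))
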